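/- arXiv:1807.06885 — 2 statements merged into one kernel-verified Lean document; each statement's English description precedes it below -/
import Mathlib

section
/- There exist three unit vectors e₁, e₂, e₃ ∈ ℝ² and C^∞ maps μ₁, μ₂, μ₃ : ℝ² → ℝ with μᵢ(v) ≥ 1 for every v ∈ ℝ² and every i ∈ {1,2,3}, such that μ₁(v) e₁ + μ₂(v) e₂ + μ₃(v) e₃ = v for all v ∈ ℝ². -/
open Real

/-- Lemma 5 of the paper / Lemma 9 of [GKS], disk case.
There exist three unit vectors `e₁, e₂, e₃ ∈ ℝ²` and `C^∞` maps `μᵢ : ℝ² → ℝ` with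
`μᵢ(v) ≥ 1` for every `v` and every `i`, such that `μ₁(v) e₁ + μ₂(v) e₂ + μ₃(v) e₃ = v`
for all `v ∈ ℝ²`. -/
theorem stmt1 :
    ∃ (e : Fin 3 → EuclideanSpace ℝ (Fin 2)) (μ : Fin 3 → EuclideanSpace ℝ (Fin 2) → ℝ),
      (∀ i, ‖e i‖ = 1) ∧ (∀ i, ContDiff ℝ (⊤ : ℕ∞) (μ i)) ∧ (∀ i v, 1 ≤ μ i v) ∧
      (∀ v, ∑ i, μ i v • e i = v) := by
  set s : ℝ := Real.sqrt 3 with hs_def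
  have hs : s ^ 2 = 3 := Real.sq_sqrt (by norm_num)
  set E : ℝ → ℝ → EuclideanSpace ℝ (Fin 2) :=
    fun a b => (WithLp.equiv 2 (Fin 2 → ℝ)).symm ![a, b] with hE
  have hnorm : ∀ a b : ℝ, ‖E a b‖ = Real.sqrt (a^2 + b^2) := by
    intro a b
    simp [hE, EuclideanSpace.norm_eq, Fin.sum_univ_two, WithLp.equiv_symm_apply, PiLp.toLp_apply, sq_abs]
  have hunit : ∀ i, ‖(![E 1 0, E (-1/2) (s/2), E (-1/2) (-s/2)] : Fin 3 → _) i‖ = 1 := by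
    intro i
    fin_cases i <;> simp [hnorm] <;> nlinarith [hs]
  refine ⟨![E 1 0, E (-1/2) (s/2), E (-1/2) (-s/2)],
    fun i v => 1 + (2/3) * (Real.sqrt (‖v‖^2 + 1) +
      inner ℝ v (![E 1 0, E (-1/2) (s/2), E (-1/2) (-s/2)] i)), hunit, ?_, ?_, ?_⟩
  · intro i
    apply ContDiff.add contDiff_const
    apply ContDiff.mul contDiff_const
    apply ContDiff.add
    · apply ContDiff.sqrt
      · exact (contDiff_norm_sq ℝ).add contDiff_const
      · intro v; positivity
    · exact contDiff_id.inner ℝ contDiff_const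
  · intro i v
    have h1 : |(inner ℝ v (![E 1 0, E (-1/2) (s/2), E (-1/2) (-s/2)] i) : ℝ)| ≤ ‖v‖ := by
      calc |(inner ℝ v (![E 1 0, E (-1/2) (s/2), E (-1/2) (-s/2)] i) : ℝ)|
          ≤ ‖v‖ * ‖![E 1 0, E (-1/2) (s/2), E (-1/2) (-s/2)] i‖ := abs_real_inner_le_norm _ _
        _ = ‖v‖ := by rw [hunit i, mul_one]
    have h2 : ‖v‖ ≤ Real.sqrt (‖v‖^2 + 1) := by
      rw [show ‖v‖ = Real.sqrt (‖v‖^2) by rw [Real.sqrt_sq (norm_nonneg v)]]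
      exact Real.sqrt_le_sqrt (by nlinarith [norm_nonneg v, Real.sq_sqrt (sq_nonneg ‖v‖)])
    nlinarith [abs_le.1 h1, h2]
  · intro v
    have hin : ∀ a b : ℝ, (inner ℝ v (E a b) : ℝ) = v 0 * a + v 1 * b := by
      intro a b
      simp [hE, PiLp.inner_apply, Fin.sum_univ_two, WithLp.equiv_symm_apply, PiLp.toLp_apply, mul_comm]
    apply PiLp.ext
    intro j
    simp only [Fin.sum_univ_three, Matrix.cons_val_zero, Matrix.cons_val_one, Matrix.head_cons,
      Matrix.cons_val_two, Matrix.tail_cons]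
    rw [hin, hin, hin]
    fin_cases j <;>
      simp [hE, PiLp.smul_apply, PiLp.add_apply, WithLp.equiv_symm_apply, PiLp.toLp_apply, smul_eq_mul] <;>
      ring_nf <;> linear_combination (v 1 / 3) * hs
end

section
/- Let V : ℝ² → ℝ² be of class C¹ with V(x)·x = 0 for every x with |x| = 1, fix s₀ ∈ ℝ, and set b := (τ(s₀)·V(c(s₀))) c(s₀) − (1/π) ∫₀^{2π} (τ(s)·V(c(s))) c(s) ds ∈ ℝ². Then for every ε > 0 there exists a function α, harmonic on ℝ² ∖ {0}, whose normal derivative vanishes on the unit circle (∇α(x)·x = 0 for all |x| = 1), such that | ∫₀^{2π} (∇α(c(s)) · V(c(s))) c(s) ds − b | ≤ ε. -/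
/-- The point `c(s) = (cos s, sin s)` of the unit circle in `ℝ²`;
on the circle the outward unit normal is `n(c(s)) = c(s)`. -/
noncomputable def circ (s : ℝ) : EuclideanSpace ℝ (Fin 2) := WithLp.toLp 2 ![Real.cos s, Real.sin s]

/-- The unit tangent `τ(s) = (-sin s, cos s)` to the unit circle at `c(s)`. -/
noncomputable def tang (s : ℝ) : EuclideanSpace ℝ (Fin 2) := WithLp.toLp 2 ![-Real.sin s, Real.cos s]

/-- The pure second partial derivative of `f : ℝ² → ℝ` at `x` in direction `v`. -/
noncomputable def secondD (f : EuclideanSpace ℝ (Fin 2) → ℝ) (x v : EuclideanSpace ℝ (Fin 2)) : ℝ :=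
  fderiv ℝ (fun y => fderiv ℝ f y v) x v

/-- `f : ℝ² → ℝ` is harmonic on `s`: `C²` there with vanishing Laplacian
(sum of the two pure second partial derivatives). -/
def HarmOn2 (f : EuclideanSpace ℝ (Fin 2) → ℝ) (s : Set (EuclideanSpace ℝ (Fin 2))) : Prop :=
  ContDiffOn ℝ 2 f s ∧ ∀ x ∈ s,
    secondD f x (EuclideanSpace.single 0 1) + secondD f x (EuclideanSpace.single 1 1) = 0

open Complex MeasureTheory intervalIntegral Finset

noncomputable section

abbrev E2 := EuclideanSpace ℝ (Fin 2)

/-- the ℝ-linear map (x₀,x₁) ↦ x₀ + x₁ i -/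
def Lm : E2 →L[ℝ] ℂ :=
  Complex.ofRealCLM.comp (EuclideanSpace.proj 0) +
    Complex.I • Complex.ofRealCLM.comp (EuclideanSpace.proj (1 : Fin 2))

lemma Lm_apply (x : E2) : Lm x = (x 0 : ℂ) + (x 1 : ℂ) * Complex.I := by
  simp [Lm, mul_comm]

lemma Lm_e0 : Lm (EuclideanSpace.single (0 : Fin 2) (1:ℝ)) = 1 := by
  simp [Lm_apply, EuclideanSpace.single_apply]

lemma Lm_e1 : Lm (EuclideanSpace.single (1 : Fin 2) (1:ℝ)) = Complex.I := by
  simp [Lm_apply, EuclideanSpace.single_apply]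

lemma Lm_ne {x : E2} (hx : x ≠ 0) : Lm x ≠ 0 := by
  intro h
  apply hx
  rw [Lm_apply] at h
  have h0 : x 0 = 0 := by
    have := congrArg Complex.re h; simpa using this
  have h1 : x 1 = 0 := by
    have := congrArg Complex.im h; simpa using this
  ext i
  fin_cases i <;> simpa [h0, h1]

lemma Lm_norm (x : E2) : ‖Lm x‖ = ‖x‖ := by
  rw [Lm_apply]
  rw [EuclideanSpace.norm_eq]
  rw [Complex.norm_def, Complex.normSq_apply]
  simp [Fin.sum_univ_two, pow_two]

/-- real part of a complex function, as fn on ℝ² -/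
def holR (F : ℂ → ℂ) (x : E2) : ℝ := (F (Lm x)).re

section master

variable {F F' F'' : ℂ → ℂ}

lemma hasFDerivAt_holR (hd : ∀ z : ℂ, z ≠ 0 → HasDerivAt F (F' z) z) {x : E2} (hx : x ≠ 0) :
    HasFDerivAt (holR F)
      (Complex.reCLM.comp
        ((((1 : ℂ →L[ℂ] ℂ).smulRight (F' (Lm x))).restrictScalars ℝ).comp Lm)) x := by
  have h1 : HasFDerivAt F ((1 : ℂ →L[ℂ] ℂ).smulRight (F' (Lm x))) (Lm x) :=
    (hd _ (Lm_ne hx)).hasFDerivAt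
  have h2 := (h1.restrictScalars ℝ).comp x (Lm.hasFDerivAt)
  exact Complex.reCLM.hasFDerivAt.comp x h2

lemma fderiv_holR (hd : ∀ z : ℂ, z ≠ 0 → HasDerivAt F (F' z) z) {x : E2} (hx : x ≠ 0) (v : E2) :
    fderiv ℝ (holR F) x v = (Lm v * F' (Lm x)).re := by
  rw [(hasFDerivAt_holR hd hx).fderiv]
  simp [smul_eq_mul]

end master

end
noncomputable section
section master2
variable {F F' F'' : ℂ → ℂ}

lemma inner_gradient_holR (hd : ∀ z : ℂ, z ≠ 0 → HasDerivAt F (F' z) z)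
    {x : E2} (hx : x ≠ 0) (v : E2) :
    (inner ℝ (gradient (holR F) x) v : ℝ) = (Lm v * F' (Lm x)).re := by
  rw [gradient, InnerProductSpace.toDual_symm_apply]
  exact fderiv_holR hd hx v

lemma secondD_holR (hd : ∀ z : ℂ, z ≠ 0 → HasDerivAt F (F' z) z)
    (hd2 : ∀ z : ℂ, z ≠ 0 → HasDerivAt F' (F'' z) z)
    {x : E2} (hx : x ≠ 0) (v : E2) :
    secondD (holR F) x v = (Lm v * (Lm v * F'' (Lm x))).re := by
  unfold secondD
  have hev : (fun y => fderiv ℝ (holR F) y v) =ᶠ[nhds x]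
      (fun y => holR (fun w => F' w * Lm v) y) := by
    have hop : {(0:E2)}ᶜ ∈ nhds x := (isOpen_compl_singleton).mem_nhds hx
    filter_upwards [hop] with y hy
    rw [fderiv_holR hd hy v]
    simp [holR, mul_comm]
  rw [Filter.EventuallyEq.fderiv_eq hev]
  have hG : ∀ z : ℂ, z ≠ 0 → HasDerivAt (fun w => F' w * Lm v) (F'' z * Lm v) z :=
    fun z hz => (hd2 z hz).mul_const _
  rw [fderiv_holR hG hx v]
  ring_nf

lemma contDiffOn_holR (hd : ∀ z : ℂ, z ≠ 0 → HasDerivAt F (F' z) z) :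
    ContDiffOn ℝ 2 (holR F) {(0 : E2)}ᶜ := by
  have hF : DifferentiableOn ℂ F {(0:ℂ)}ᶜ := fun z hz =>
    (hd z hz).differentiableAt.differentiableWithinAt
  have hFc : ContDiffOn ℂ 2 F {(0:ℂ)}ᶜ :=
    (hF.analyticOnNhd isOpen_compl_singleton).contDiffOn (isOpen_compl_singleton.uniqueDiffOn)
  have hFr : ContDiffOn ℝ 2 F {(0:ℂ)}ᶜ := hFc.restrict_scalars ℝ
  have hcomp : ContDiffOn ℝ 2 (fun x : E2 => F (Lm x)) {(0:E2)}ᶜ := by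
    apply hFr.comp (Lm.contDiff.contDiffOn)
    intro x hx
    exact Lm_ne hx
  exact (Complex.reCLM.contDiff.comp_contDiffOn hcomp)

lemma harmOn_holR (hd : ∀ z : ℂ, z ≠ 0 → HasDerivAt F (F' z) z)
    (hd2 : ∀ z : ℂ, z ≠ 0 → HasDerivAt F' (F'' z) z) :
    HarmOn2 (holR F) {(0 : E2)}ᶜ := by
  refine ⟨contDiffOn_holR hd, fun x hx => ?_⟩
  have hx : x ≠ 0 := hx
  rw [secondD_holR hd hd2 hx, secondD_holR hd hd2 hx, Lm_e0, Lm_e1]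
  have : Complex.I * (Complex.I * F'' (Lm x)) = -(F'' (Lm x)) := by
    rw [← mul_assoc, Complex.I_mul_I]; ring
  rw [this]
  simp

end master2
end
noncomputable section blocks
open Finset

variable (M : ℕ) (A : ℕ → ℂ)

def FF (z : ℂ) : ℂ :=
  ∑ n ∈ Finset.range M, (A n * z ^ (n : ℤ) + (starRingEnd ℂ) (A n) * z ^ (-(n : ℤ)))

def FF' (z : ℂ) : ℂ :=
  ∑ n ∈ Finset.range M,
    ((n : ℂ) * A n * z ^ ((n : ℤ) - 1) - (n : ℂ) * (starRingEnd ℂ) (A n) * z ^ (-(n : ℤ) - 1))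

def FF'' (z : ℂ) : ℂ :=
  ∑ n ∈ Finset.range M,
    ((n : ℂ) * ((n : ℂ) - 1) * A n * z ^ ((n : ℤ) - 2) +
      (n : ℂ) * ((n : ℂ) + 1) * (starRingEnd ℂ) (A n) * z ^ (-(n : ℤ) - 2))

lemma hasDerivAt_FF {z : ℂ} (hz : z ≠ 0) : HasDerivAt (FF M A) (FF' M A z) z := by
  unfold FF FF'
  apply HasDerivAt.fun_sum
  intro n _
  have h1 := (hasDerivAt_zpow (n : ℤ) z (Or.inl hz)).const_mul (A n)
  have h2 := (hasDerivAt_zpow (-(n : ℤ)) z (Or.inl hz)).const_mul ((starRingEnd ℂ) (A n))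
  have := h1.add h2
  convert this using 1
  · rfl
  push_cast
  ring

lemma hasDerivAt_FF' {z : ℂ} (hz : z ≠ 0) : HasDerivAt (FF' M A) (FF'' M A z) z := by
  unfold FF' FF''
  apply HasDerivAt.fun_sum
  intro n _
  have h1 := (hasDerivAt_zpow ((n : ℤ) - 1) z (Or.inl hz)).const_mul ((n : ℂ) * A n)
  have h2 := (hasDerivAt_zpow (-(n : ℤ) - 1) z (Or.inl hz)).const_mul
    ((n : ℂ) * (starRingEnd ℂ) (A n))
  have := h1.sub h2
  convert this using 1
  · rfl
  push_cast
  ring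

end blocks
noncomputable section circle
open Finset

lemma inv_eq_conj_of_abs {w : ℂ} (hw : ‖w‖ = 1) : w⁻¹ = (starRingEnd ℂ) w := by
  rw [Complex.inv_def, Complex.normSq_eq_norm_sq, hw]
  simp

lemma re_self_mul_FF' (M : ℕ) (A : ℕ → ℂ) {z : ℂ} (hz1 : ‖z‖ = 1) :
    (z * FF' M A z).re = 0 := by
  have hz0 : z ≠ 0 := by
    intro h; rw [h] at hz1; simp at hz1
  rw [FF', Finset.mul_sum, Complex.re_sum]
  apply Finset.sum_eq_zero
  intro n _
  have hzn : ‖z ^ (n : ℤ)‖ = 1 := by rw [norm_zpow, hz1, one_zpow]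
  have e1 : z ^ ((n : ℤ) - 1) = z ^ (n : ℤ) * z⁻¹ := zpow_sub_one₀ hz0 _
  have e2 : z ^ (-(n : ℤ) - 1) = z ^ (-(n : ℤ)) * z⁻¹ := zpow_sub_one₀ hz0 _
  have e3 : z ^ (-(n : ℤ)) = (starRingEnd ℂ) (z ^ (n : ℤ)) := by
    rw [zpow_neg, inv_eq_conj_of_abs hzn]
  have key : z * ((n : ℂ) * A n * z ^ ((n : ℤ) - 1) -
      (n : ℂ) * (starRingEnd ℂ) (A n) * z ^ (-(n : ℤ) - 1)) =
      (n : ℂ) * (A n * z ^ (n : ℤ) - (starRingEnd ℂ) (A n * z ^ (n : ℤ))) := by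
    rw [e1, e2, e3, map_mul]
    field_simp
  rw [key, Complex.sub_conj]
  simp [Complex.mul_re, Complex.mul_im]

def gA (M : ℕ) (A : ℕ → ℂ) (s : ℝ) : ℝ :=
  ∑ n ∈ Finset.range M,
    (-2 * (n : ℝ)) * ((A n).re * Real.sin (n * s) + (A n).im * Real.cos (n * s))

lemma re_I_mul_FF' (M : ℕ) (A : ℕ → ℂ) (s : ℝ) :
    (Complex.I * Complex.exp (s * Complex.I) *
      FF' M A (Complex.exp (s * Complex.I))).re = gA M A s := by
  set z := Complex.exp ((s : ℂ) * Complex.I) with hzdef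
  have hz1 : ‖z‖ = 1 := Complex.norm_exp_ofReal_mul_I s
  have hz0 : z ≠ 0 := Complex.exp_ne_zero _
  rw [FF', Finset.mul_sum, Complex.re_sum, gA]
  apply Finset.sum_congr rfl
  intro n _
  have hzn : ‖z ^ (n : ℤ)‖ = 1 := by rw [norm_zpow, hz1, one_zpow]
  have e1 : z ^ ((n : ℤ) - 1) = z ^ (n : ℤ) * z⁻¹ := zpow_sub_one₀ hz0 _
  have e2 : z ^ (-(n : ℤ) - 1) = z ^ (-(n : ℤ)) * z⁻¹ := zpow_sub_one₀ hz0 _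
  have e3 : z ^ (-(n : ℤ)) = (starRingEnd ℂ) (z ^ (n : ℤ)) := by
    rw [zpow_neg, inv_eq_conj_of_abs hzn]
  have key : Complex.I * z * ((n : ℂ) * A n * z ^ ((n : ℤ) - 1) -
      (n : ℂ) * (starRingEnd ℂ) (A n) * z ^ (-(n : ℤ) - 1)) =
      (n : ℂ) * Complex.I * (A n * z ^ (n : ℤ) - (starRingEnd ℂ) (A n * z ^ (n : ℤ))) := by
    rw [e1, e2, e3, map_mul]
    field_simp
  have ez : z ^ (n : ℤ) = Complex.exp ((n * s : ℝ) * Complex.I) := by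
    rw [hzdef, ← Complex.exp_int_mul]
    push_cast
    ring_nf
  have him : (A n * z ^ (n : ℤ)).im = (A n).re * Real.sin (n * s) + (A n).im * Real.cos (n * s) := by
    rw [ez, Complex.mul_im, Complex.exp_ofReal_mul_I_re, Complex.exp_ofReal_mul_I_im]
  rw [key, Complex.sub_conj, him]
  simp [Complex.mul_re, Complex.mul_im, ← Complex.ofReal_mul, ← Complex.ofReal_sin,
    ← Complex.ofReal_cos]
  ring

end circle
noncomputable section geom
open Real

lemma circ_zero (s : ℝ) : circ s 0 = Real.cos s := rfl
lemma circ_one (s : ℝ) : circ s 1 = Real.sin s := rfl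

lemma Lm_circ (s : ℝ) : Lm (circ s) = Complex.exp (s * Complex.I) := by
  rw [Lm_apply, Complex.exp_mul_I, circ_zero, circ_one, ← Complex.ofReal_cos,
    ← Complex.ofReal_sin]

lemma norm_circ (s : ℝ) : ‖circ s‖ = 1 := by
  rw [← Lm_norm, Lm_circ]
  exact Complex.norm_exp_ofReal_mul_I s

lemma circ_ne_zero (s : ℝ) : circ s ≠ 0 := by
  intro h
  have := norm_circ s
  rw [h] at this
  simp at this

lemma continuous_circ : Continuous circ := by
  have : circ = fun s => (EuclideanSpace.equiv (Fin 2) ℝ).symm ![Real.cos s, Real.sin s] := rfl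
  rw [this]
  apply (EuclideanSpace.equiv (Fin 2) ℝ).symm.continuous.comp
  apply continuous_pi
  intro i
  fin_cases i <;> simp <;> fun_prop

lemma continuous_tang : Continuous tang := by
  have : tang = fun s => (EuclideanSpace.equiv (Fin 2) ℝ).symm ![-Real.sin s, Real.cos s] := rfl
  rw [this]
  apply (EuclideanSpace.equiv (Fin 2) ℝ).symm.continuous.comp
  apply continuous_pi
  intro i
  fin_cases i <;> simp <;> fun_prop

section withV
variable (V : E2 → E2)

def fV (s : ℝ) : ℝ := inner ℝ (tang s) (V (circ s))

lemma fV_eq (s : ℝ) : fV V s = -Real.sin s * V (circ s) 0 + Real.cos s * V (circ s) 1 := by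
  simp [fV, PiLp.inner_apply, Fin.sum_univ_two, tang]
  ring

lemma continuous_fV (hV : Continuous V) : Continuous (fV V) := by
  apply Continuous.inner continuous_tang (hV.comp continuous_circ)

lemma fV_periodic (s : ℝ) : fV V (s + 2 * Real.pi) = fV V s := by
  have hc : circ (s + 2 * Real.pi) = circ s := by
    unfold circ
    rw [Real.cos_add_two_pi, Real.sin_add_two_pi]
  have ht : tang (s + 2 * Real.pi) = tang s := by
    unfold tang
    rw [Real.cos_add_two_pi, Real.sin_add_two_pi]
  rw [fV, fV, hc, ht]

lemma Lm_V_circ (htan : ∀ x : E2, ‖x‖ = 1 → (inner ℝ (V x) x : ℝ) = 0) (s : ℝ) :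
    Lm (V (circ s)) = (fV V s : ℂ) * (Complex.I * Complex.exp (s * Complex.I)) := by
  have h := htan (circ s) (norm_circ s)
  have h' : V (circ s) 0 * Real.cos s + V (circ s) 1 * Real.sin s = 0 := by
    simpa [PiLp.inner_apply, Fin.sum_univ_two, circ_zero, circ_one, mul_comm] using h
  have pyth := Real.sin_sq_add_cos_sq s
  have h0 : V (circ s) 0 = -(fV V s * Real.sin s) := by
    rw [fV_eq]
    linear_combination Real.cos s * h' + (-(V (circ s) 0)) * pyth
  have h1 : V (circ s) 1 = fV V s * Real.cos s := by
    rw [fV_eq]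
    linear_combination Real.sin s * h' + (-(V (circ s) 1)) * pyth
  rw [Lm_apply, h0, h1, Complex.exp_mul_I]
  apply Complex.ext <;>
    simp [Complex.mul_re, Complex.mul_im, ← Complex.ofReal_cos, ← Complex.ofReal_sin] <;>
    ring

lemma integrand_eq (htan : ∀ x : E2, ‖x‖ = 1 → (inner ℝ (V x) x : ℝ) = 0) (M : ℕ) (A : ℕ → ℂ)
    (s : ℝ) :
    (inner ℝ (gradient (holR (FF M A)) (circ s)) (V (circ s)) : ℝ) = gA M A s * fV V s := by
  have hx : circ s ≠ 0 := circ_ne_zero s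
  rw [inner_gradient_holR (fun z hz => hasDerivAt_FF M A hz) hx]
  rw [Lm_V_circ V htan s, Lm_circ]
  have hre : (fV V s : ℂ) * (Complex.I * Complex.exp (s * Complex.I)) *
        FF' M A (Complex.exp (s * Complex.I)) =
      (fV V s : ℂ) * (Complex.I * Complex.exp (s * Complex.I) *
        FF' M A (Complex.exp (s * Complex.I))) := by ring
  rw [hre, Complex.re_ofReal_mul, re_I_mul_FF' M A s, mul_comm]

end withV
end geom
noncomputable section neumann

lemma neumann_holR (M : ℕ) (A : ℕ → ℂ) :
    ∀ x : E2, ‖x‖ = 1 → (inner ℝ (gradient (holR (FF M A)) x) x : ℝ) = 0 := by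
  intro x hx
  have hx0 : x ≠ 0 := by
    intro h; rw [h] at hx; simp at hx
  rw [inner_gradient_holR (fun z hz => hasDerivAt_FF M A hz) hx0]
  apply re_self_mul_FF'
  rw [Lm_norm, hx]

end neumann

noncomputable section integrals
open intervalIntegral Real

variable (V : E2 → E2)

def ICn (n : ℕ) : E2 := ∫ s in (0:ℝ)..(2*π), (Real.cos (n * s) * fV V s) • circ s
def ISn (n : ℕ) : E2 := ∫ s in (0:ℝ)..(2*π), (Real.sin (n * s) * fV V s) • circ s

lemma intervalIntegrable_smul_circ (c : ℝ → ℝ) (hc : Continuous c) (a b : ℝ) :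
    IntervalIntegrable (fun s => c s • circ s) MeasureTheory.volume a b :=
  ((hc.smul continuous_circ)).intervalIntegrable a b

lemma integral_gA (hV : Continuous V) (M : ℕ) (A : ℕ → ℂ) :
    (∫ s in (0:ℝ)..(2*π), (gA M A s * fV V s) • circ s) =
      ∑ n ∈ Finset.range M,
        (((-2*(n:ℝ)) * (A n).re) • ISn V n + ((-2*(n:ℝ)) * (A n).im) • ICn V n) := by
  have hf := continuous_fV V hV
  have hptwise : ∀ s : ℝ, (gA M A s * fV V s) • circ s =
      ∑ n ∈ Finset.range M,
        ((((-2*(n:ℝ)) * (A n).re) • ((Real.sin (n*s) * fV V s) • circ s)) +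
         (((-2*(n:ℝ)) * (A n).im) • ((Real.cos (n*s) * fV V s) • circ s))) := by
    intro s
    rw [gA, Finset.sum_mul, Finset.sum_smul]
    apply Finset.sum_congr rfl
    intro n _
    rw [smul_smul, smul_smul, ← add_smul]
    congr 1
    ring
  have h1 : (∫ s in (0:ℝ)..(2*π), (gA M A s * fV V s) • circ s) =
      ∫ s in (0:ℝ)..(2*π), ∑ n ∈ Finset.range M,
        ((((-2*(n:ℝ)) * (A n).re) • ((Real.sin (n*s) * fV V s) • circ s)) +
         (((-2*(n:ℝ)) * (A n).im) • ((Real.cos (n*s) * fV V s) • circ s))) := by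
    apply intervalIntegral.integral_congr
    intro s _
    exact hptwise s
  rw [h1, intervalIntegral.integral_finset_sum]
  · apply Finset.sum_congr rfl
    intro n _
    rw [intervalIntegral.integral_add, intervalIntegral.integral_smul, intervalIntegral.integral_smul]
    · rfl
    · exact (intervalIntegrable_smul_circ (fun s => Real.sin (n*s) * fV V s) (by fun_prop) _ _).smul ((-2*(n:ℝ)) * (A n).re)
    · exact (intervalIntegrable_smul_circ (fun s => Real.cos (n*s) * fV V s) (by fun_prop) _ _).smul ((-2*(n:ℝ)) * (A n).im)
  · intro n _
    exact ((intervalIntegrable_smul_circ (fun s => Real.sin (n*s) * fV V s) (by fun_prop) _ _).smul ((-2*(n:ℝ)) * (A n).re)).add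
      ((intervalIntegrable_smul_circ (fun s => Real.cos (n*s) * fV V s) (by fun_prop) _ _).smul ((-2*(n:ℝ)) * (A n).im))

end integrals
noncomputable section fourierpart
open Real MeasureTheory

lemma fact_two_pi : Fact (0 < 2 * π) := ⟨by positivity⟩

lemma const_of_coeffs {h : ℝ → ℝ} (hcont : Continuous h) (hper : Function.Periodic h (2*π))
    (hzc : ∀ n : ℕ, 1 ≤ n → (∫ s in (0:ℝ)..(2*π), Real.cos (n*s) * h s) = 0)
    (hzs : ∀ n : ℕ, 1 ≤ n → (∫ s in (0:ℝ)..(2*π), Real.sin (n*s) * h s) = 0) :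
    ∀ t t' : ℝ, h t = h t' := by
  haveI : Fact (0 < 2 * π) := fact_two_pi
  set hc : ℝ → ℂ := fun s => (h s : ℂ) with hcdef
  have hperC : Function.Periodic hc (2*π) := fun s => by simp [hcdef, hper s]
  set hl : AddCircle (2*π) → ℂ := hperC.lift with hldef
  have hlcont : Continuous hl := by
    apply Continuous.quotient_liftOn'
    exact Complex.continuous_ofReal.comp hcont
  -- integrals of cos/sin against h for all integers n ≠ 0 vanish
  have hzc' : ∀ n : ℤ, n ≠ 0 → (∫ s in (0:ℝ)..(2*π), Real.cos (n*s) * h s) = 0 := by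
    intro n hn
    rcases Int.natAbs_eq n with he | he
    · have h1 : (1:ℕ) ≤ n.natAbs := by omega
      have := hzc n.natAbs h1
      rw [he, Int.cast_natCast]
      exact this
    · have h1 : (1:ℕ) ≤ n.natAbs := by omega
      have := hzc n.natAbs h1
      rw [he]
      simp only [Int.cast_neg, Int.cast_natCast, neg_mul, Real.cos_neg]
      exact this
  have hzs' : ∀ n : ℤ, n ≠ 0 → (∫ s in (0:ℝ)..(2*π), Real.sin (n*s) * h s) = 0 := by
    intro n hn
    rcases Int.natAbs_eq n with he | he
    · have h1 : (1:ℕ) ≤ n.natAbs := by omega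
      have := hzs n.natAbs h1
      rw [he, Int.cast_natCast]
      exact this
    · have h1 : (1:ℕ) ≤ n.natAbs := by omega
      have := hzs n.natAbs h1
      rw [he]
      simp only [Int.cast_neg, Int.cast_natCast, neg_mul, Real.sin_neg]
      rw [intervalIntegral.integral_neg, neg_eq_zero]
      exact this
  have hcoeff : ∀ n : ℤ, n ≠ 0 → fourierCoeff hl n = 0 := by
    intro n hn
    rw [fourierCoeff_eq_intervalIntegral hl n 0]
    have hint : (∫ x in (0:ℝ)..(0+2*π), (fourier (-n) (x : AddCircle (2*π)) : ℂ) • hl x) =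
        (((∫ s in (0:ℝ)..(2*π), Real.cos (n*s) * h s : ℝ) : ℂ) -
          ((∫ s in (0:ℝ)..(2*π), Real.sin (n*s) * h s : ℝ) : ℂ) * Complex.I) := by
      rw [zero_add]
      have heq : ∀ s : ℝ, (fourier (-n) (s : AddCircle (2*π)) : ℂ) • hl s =
          ((Real.cos (n*s) * h s : ℝ) : ℂ) - ((Real.sin (n*s) * h s : ℝ) : ℂ) * Complex.I := by
        intro s
        rw [hldef, Function.Periodic.lift_coe, fourier_coe_apply]
        have harg : 2 * ↑π * Complex.I * ↑(-n) * ↑s / ↑(2 * π) = ((-(n*s) : ℝ) : ℂ) * Complex.I := by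
          have hpi : ((2*π : ℝ) : ℂ) ≠ 0 := Complex.ofReal_ne_zero.mpr (by positivity)
          rw [div_eq_iff hpi]
          push_cast
          ring
        rw [harg, Complex.exp_mul_I]
        rw [← Complex.ofReal_cos, ← Complex.ofReal_sin, Real.cos_neg, Real.sin_neg]
        rw [smul_eq_mul, hcdef]
        push_cast
        ring
      rw [intervalIntegral.integral_congr (fun s _ => heq s)]
      have i1 : IntervalIntegrable (fun s => ((Real.cos (n*s) * h s : ℝ) : ℂ))
          MeasureTheory.volume 0 (2*π) :=
        (Complex.continuous_ofReal.comp (by fun_prop)).intervalIntegrable _ _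
      have i2 : IntervalIntegrable (fun s => ((Real.sin (n*s) * h s : ℝ) : ℂ) * Complex.I)
          MeasureTheory.volume 0 (2*π) :=
        ((Complex.continuous_ofReal.comp (by fun_prop)).mul continuous_const).intervalIntegrable _ _
      rw [intervalIntegral.integral_sub i1 i2, intervalIntegral.integral_mul_const,
        intervalIntegral.integral_ofReal, intervalIntegral.integral_ofReal]
    rw [hint, hzc' n hn, hzs' n hn]
    simp
  -- conclude hl is a.e. equal (hence equal) to a constant
  set c0 : ℂ := fourierCoeff hl 0 with hc0
  have key : (ContinuousMap.toLp (E := ℂ) 2 AddCircle.haarAddCircle ℂ ⟨hl, hlcont⟩)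
      = c0 • fourierLp 2 0 := by
    apply fourierBasis.repr.injective
    ext n
    rw [fourierBasis_repr, fourierCoeff_toLp]
    simp only [ContinuousMap.coe_mk]
    rw [LinearIsometryEquiv.map_smul]
    have : (fourierLp (T := 2*π) 2 0) = fourierBasis 0 := by
      rw [← coe_fourierBasis]
    rw [this, fourierBasis.repr_self]
    by_cases hn : n = 0
    · subst hn
      simp [lp.coeFn_smul, lp.single_apply]
      exact hc0.symm
    · rw [hcoeff n hn]
      simp [lp.coeFn_smul, lp.single_apply, hn]
  have hae : (⇑(⟨hl, hlcont⟩ : C(AddCircle (2*π), ℂ)) : AddCircle (2*π) → ℂ)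
      =ᵐ[AddCircle.haarAddCircle] (fun _ => c0) := by
    have h1 := ContinuousMap.coeFn_toLp (p := 2) (μ := AddCircle.haarAddCircle) (𝕜 := ℂ)
      (⟨hl, hlcont⟩ : C(AddCircle (2*π), ℂ))
    have h2 := MeasureTheory.Lp.coeFn_smul c0 (fourierLp (T := 2*π) 2 0)
    have h3 := coeFn_fourierLp (T := 2*π) 2 0
    rw [key] at h1
    filter_upwards [h1.symm, h2, h3] with x e1 e2 e3
    rw [e1, e2, Pi.smul_apply, e3]
    rw [fourier_zero]
    simp
  have heq : hl = fun _ => c0 := by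
    have := (Continuous.ae_eq_iff_eq (μ := AddCircle.haarAddCircle) hlcont
      (continuous_const)).mp hae
    exact this
  intro t t'
  have ht : (h t : ℂ) = c0 := by
    have : hl (t : AddCircle (2*π)) = c0 := by rw [heq]
    rwa [hldef, Function.Periodic.lift_coe] at this
  have ht' : (h t' : ℂ) = c0 := by
    have : hl (t' : AddCircle (2*π)) = c0 := by rw [heq]
    rwa [hldef, Function.Periodic.lift_coe] at this
  exact_mod_cast ht.trans ht'.symm

end fourierpart
noncomputable section degenerate
open Real Set Filter

lemma inner_u_circ (u : E2) (s : ℝ) :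
    (inner ℝ u (circ s) : ℝ) = u 0 * Real.cos s + u 1 * Real.sin s := by
  simp [PiLp.inner_apply, Fin.sum_univ_two, circ]
  ring

lemma fV_zero_of_const (V : E2 → E2) (hVc : Continuous V) (u : E2) (hu : u ≠ 0)
    (hconst : ∀ t t' : ℝ, fV V t * (inner ℝ u (circ t) : ℝ) = fV V t' * (inner ℝ u (circ t') : ℝ)) :
    ∀ s : ℝ, fV V s = 0 := by
  -- a zero of w
  have hzero : ∃ t₀ : ℝ, (inner ℝ u (circ t₀) : ℝ) = 0 := by
    by_cases h1 : u 1 = 0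
    · exact ⟨π/2, by rw [inner_u_circ, h1]; simp [Real.cos_pi_div_two]⟩
    · refine ⟨Real.arctan (-(u 0) / u 1), ?_⟩
      rw [inner_u_circ]
      have hcos : Real.cos (Real.arctan (-(u 0) / u 1)) ≠ 0 :=
        (Real.cos_arctan_pos _).ne'
      have htan : Real.tan (Real.arctan (-(u 0) / u 1)) = -(u 0) / u 1 := Real.tan_arctan _
      rw [Real.tan_eq_sin_div_cos] at htan
      field_simp at htan
      rw [neg_div]
      linear_combination htan
  obtain ⟨t₀, ht₀⟩ := hzero
  have hz : ∀ t : ℝ, fV V t * (inner ℝ u (circ t) : ℝ) = 0 := by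
    intro t
    rw [hconst t t₀, ht₀, mul_zero]
  intro s
  by_cases hws : (inner ℝ u (circ s) : ℝ) = 0
  · -- need limit argument
    set a : ℝ := -(u 0) * Real.sin s + u 1 * Real.cos s with hadef
    have hws' : u 0 * Real.cos s + u 1 * Real.sin s = 0 := by rwa [inner_u_circ] at hws
    have ha : a ≠ 0 := by
      intro h0
      apply hu
      have pyth := Real.sin_sq_add_cos_sq s
      have h00 : u 0 = 0 := by
        rw [hadef] at h0
        linear_combination Real.cos s * hws' - Real.sin s * h0 - u 0 * pyth
      have h11 : u 1 = 0 := by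
        rw [hadef] at h0
        linear_combination Real.sin s * hws' + Real.cos s * h0 - u 1 * pyth
      ext i
      fin_cases i <;> simp [h00, h11] <;> rfl
    have hfd : ∀ δ ∈ Set.Ioo (0:ℝ) π, fV V (s + δ) = 0 := by
      intro δ hδ
      have hw : (inner ℝ u (circ (s+δ)) : ℝ) = a * Real.sin δ := by
        rw [inner_u_circ, Real.cos_add, Real.sin_add, hadef]
        linear_combination Real.cos δ * hws'
      have hwne : (inner ℝ u (circ (s+δ)) : ℝ) ≠ 0 := by
        rw [hw]
        exact mul_ne_zero ha (ne_of_gt (Real.sin_pos_of_pos_of_lt_pi hδ.1 hδ.2))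
      have := hz (s + δ)
      rcases mul_eq_zero.mp this with h | h
      · exact h
      · exact absurd h hwne
    have hten : Filter.Tendsto (fun δ : ℝ => fV V (s + δ)) (nhdsWithin 0 (Set.Ioi 0))
        (nhds (fV V s)) := by
      have hc : Continuous (fun δ : ℝ => fV V (s + δ)) :=
        (continuous_fV V hVc).comp (continuous_const.add continuous_id)
      have := hc.tendsto 0
      simp only [add_zero] at this
      exact this.mono_left nhdsWithin_le_nhds
    have hev : (fun δ : ℝ => fV V (s + δ)) =ᶠ[nhdsWithin 0 (Set.Ioi 0)] (fun _ => 0) := by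
      filter_upwards [Ioo_mem_nhdsGT Real.pi_pos] with δ hδ
      exact hfd δ hδ
    exact tendsto_nhds_unique (hten.congr' hev) tendsto_const_nhds
  · rcases mul_eq_zero.mp (hz s) with h | h
    · exact h
    · exact absurd h hws

end degenerate
noncomputable section finalprep
open Real

lemma harm_zero : HarmOn2 (fun _ : E2 => (0:ℝ)) {(0 : E2)}ᶜ := by
  constructor
  · exact contDiffOn_const
  · intro x _
    have hz : ∀ v : E2, secondD (fun _ : E2 => (0:ℝ)) x v = 0 := by
      intro v
      unfold secondD
      have h1 : (fun y : E2 => fderiv ℝ (fun _ : E2 => (0:ℝ)) y v) = fun _ => 0 := by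
        funext y
        simp
      rw [h1]
      simp
    rw [hz, hz, add_zero]

lemma gradient_zero_fun (x : E2) : gradient (fun _ : E2 => (0:ℝ)) x = 0 := by
  rw [gradient]
  have : fderiv ℝ (fun _ : E2 => (0:ℝ)) x = 0 := fderiv_const_apply 0
  rw [this]
  simp

lemma circ_periodic : Function.Periodic circ (2*π) := by
  intro s
  unfold circ
  rw [Real.cos_add_two_pi, Real.sin_add_two_pi]

end finalprep


open Real in
/-- Lemma 23 (LemBase1) of the paper.
For a `C¹` tangential field `V` on the unit circle and
`b = (τ(s₀)·V(c(s₀))) c(s₀) − (1/π) ∫₀^{2π} (τ(s)·V(c(s))) c(s) ds`, for every `ε > 0`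
there is a function `α`, harmonic on `ℝ² ∖ {0}`, with vanishing normal derivative on the
unit circle, such that `| ∫₀^{2π} (∇α(c(s))·V(c(s))) c(s) ds − b | ≤ ε`. -/
theorem stmt5 (V : EuclideanSpace ℝ (Fin 2) → EuclideanSpace ℝ (Fin 2))
    (hV : ContDiff ℝ 1 V)
    (htan : ∀ x : EuclideanSpace ℝ (Fin 2), ‖x‖ = 1 → (inner ℝ (V x) x : ℝ) = 0)
    (s₀ : ℝ) :
    ∀ ε > 0, ∃ α : EuclideanSpace ℝ (Fin 2) → ℝ,
      HarmOn2 α {(0 : EuclideanSpace ℝ (Fin 2))}ᶜ ∧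
      (∀ x : EuclideanSpace ℝ (Fin 2), ‖x‖ = 1 → (inner ℝ (gradient α x) x : ℝ) = 0) ∧
      ‖(∫ s in (0:ℝ)..(2 * Real.pi), (inner ℝ (gradient α (circ s)) (V (circ s)) : ℝ) • circ s)
        - ((inner ℝ (tang s₀) (V (circ s₀)) : ℝ) • circ s₀
           - (1 / Real.pi) •
             ∫ s in (0:ℝ)..(2 * Real.pi), (inner ℝ (tang s) (V (circ s)) : ℝ) • circ s)‖ ≤ ε := by
  classical
  intro ε hε
  set ψ : ℕ × Bool → E2 := fun p => if p.2 then ICn V (p.1+1) else ISn V (p.1+1) with hψ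
  by_cases hspan : Submodule.span ℝ (Set.range ψ) = ⊤
  · -- nondegenerate case : we can realize the target vector exactly
    set bvec : E2 := (inner ℝ (tang s₀) (V (circ s₀)) : ℝ) • circ s₀ -
      (1 / Real.pi) •
        ∫ s in (0:ℝ)..(2 * Real.pi), (inner ℝ (tang s) (V (circ s)) : ℝ) • circ s with hb
    have hmem : bvec ∈ Submodule.span ℝ (Set.range ψ) := by rw [hspan]; exact Submodule.mem_top
    obtain ⟨c, hc⟩ := (Finsupp.mem_span_range_iff_exists_finsupp).mp hmem
    set K : ℕ := c.support.sup (fun p => p.1) + 1 with hK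
    set A : ℕ → ℂ := fun n => if n = 0 then 0 else
      Complex.mk (c (n-1, false) / (-2*(n:ℝ))) (c (n-1, true) / (-2*(n:ℝ))) with hA
    refine ⟨holR (FF (K+1) A),
      harmOn_holR (fun z hz => hasDerivAt_FF _ _ hz) (fun z hz => hasDerivAt_FF' _ _ hz),
      neumann_holR _ _, ?_⟩
    have h1 : (∫ s in (0:ℝ)..(2 * Real.pi),
        (inner ℝ (gradient (holR (FF (K+1) A)) (circ s)) (V (circ s)) : ℝ) • circ s) =
        ∫ s in (0:ℝ)..(2 * Real.pi), (gA (K+1) A s * fV V s) • circ s := by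
      apply intervalIntegral.integral_congr
      intro s _
      simp only [integrand_eq V htan]
    rw [h1, integral_gA V hV.continuous]
    have hterm : ∀ k : ℕ,
        ((-2*((k+1:ℕ):ℝ)) * (A (k+1)).re) • ISn V (k+1) +
          ((-2*((k+1:ℕ):ℝ)) * (A (k+1)).im) • ICn V (k+1)
        = c (k, false) • ISn V (k+1) + c (k, true) • ICn V (k+1) := by
      intro k
      have hne : (-2*((k+1:ℕ):ℝ)) ≠ 0 := by
        push_cast
        intro hcon
        nlinarith [Nat.cast_nonneg (α := ℝ) k]
      have hre : (A (k+1)).re = c (k, false) / (-2*((k+1:ℕ):ℝ)) := by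
        rw [hA]
        simp
      have him : (A (k+1)).im = c (k, true) / (-2*((k+1:ℕ):ℝ)) := by
        rw [hA]
        simp
      rw [hre, him]
      rw [mul_div_cancel₀ _ hne, mul_div_cancel₀ _ hne]
    have hzeroterm : ((-2*((0:ℕ):ℝ)) * (A 0).re) • ISn V 0 +
        ((-2*((0:ℕ):ℝ)) * (A 0).im) • ICn V 0 = 0 := by
      simp
    have hsum : (∑ n ∈ Finset.range (K+1),
        (((-2*(n:ℝ)) * (A n).re) • ISn V n + ((-2*(n:ℝ)) * (A n).im) • ICn V n)) = bvec := by
      rw [Finset.sum_range_succ']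
      rw [hzeroterm, add_zero]
      have hstep : (∑ k ∈ Finset.range K,
          (((-2*((k+1:ℕ):ℝ)) * (A (k+1)).re) • ISn V (k+1) +
            ((-2*((k+1:ℕ):ℝ)) * (A (k+1)).im) • ICn V (k+1))) =
          ∑ k ∈ Finset.range K, (c (k, false) • ISn V (k+1) + c (k, true) • ICn V (k+1)) :=
        Finset.sum_congr rfl (fun k _ => hterm k)
      rw [hstep]
      -- now compare with the Finsupp sum
      rw [← hc]
      rw [Finsupp.sum_of_support_subset c
        (s := (Finset.range K) ×ˢ (Finset.univ : Finset Bool))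
        (by
          intro p hp
          rw [Finset.mem_product]
          refine ⟨?_, Finset.mem_univ _⟩
          rw [Finset.mem_range, hK]
          exact Nat.lt_succ_of_le (Finset.le_sup (f := fun p : ℕ × Bool => p.1) hp))
        _ (fun i _ => zero_smul ℝ (ψ i))]
      rw [Finset.sum_product]
      apply Finset.sum_congr rfl
      intro k _
      rw [Fintype.sum_bool]
      simp [hψ, add_comm]
    rw [hsum, sub_self, norm_zero]
    exact le_of_lt hε
  · -- degenerate case : fV V vanishes identically
    have hne : (Submodule.span ℝ (Set.range ψ))ᗮ ≠ ⊥ := by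
      rw [Ne, Submodule.orthogonal_eq_bot_iff]
      exact hspan
    obtain ⟨u, humem, hu0⟩ := Submodule.ne_bot_iff _ |>.mp hne
    have horth : ∀ v ∈ Submodule.span ℝ (Set.range ψ), (inner ℝ v u : ℝ) = 0 :=
      (Submodule.mem_orthogonal _ u).mp humem
    have hpsi_orth : ∀ p : ℕ × Bool, (inner ℝ (ψ p) u : ℝ) = 0 := fun p =>
      horth _ (Submodule.subset_span (Set.mem_range_self p))
    -- the function h
    have hcont_fV : Continuous (fV V) := continuous_fV V hV.continuous
    set h : ℝ → ℝ := fun s => fV V s * (inner ℝ u (circ s) : ℝ) with hh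
    have hcont : Continuous h := by
      apply hcont_fV.mul
      exact Continuous.inner continuous_const continuous_circ
    have hper : Function.Periodic h (2*π) := by
      intro s
      rw [hh]
      simp only
      rw [fV_periodic V s, circ_periodic s]
    -- the integrals vanish
    have hIC : ∀ n : ℕ, 1 ≤ n → (inner ℝ (ICn V n) u : ℝ) = 0 := by
      intro n hn
      have := hpsi_orth (n-1, true)
      rw [hψ] at this
      simp only [if_true] at this
      rwa [Nat.sub_add_cancel hn] at this
    have hIS : ∀ n : ℕ, 1 ≤ n → (inner ℝ (ISn V n) u : ℝ) = 0 := by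
      intro n hn
      have := hpsi_orth (n-1, false)
      rw [hψ] at this
      simp only [if_false] at this
      rwa [Nat.sub_add_cancel hn] at this
    -- rewrite as interval integrals of h against cos/sin
    have hswap : ∀ (cf : ℝ → ℝ), Continuous cf →
        (∫ s in (0:ℝ)..(2*π), cf s * h s) =
          (inner ℝ (∫ s in (0:ℝ)..(2*π), (cf s * fV V s) • circ s) u : ℝ) := by
      intro cf hcf
      have hii : IntervalIntegrable (fun s => (cf s * fV V s) • circ s)
          MeasureTheory.volume 0 (2*π) :=
        intervalIntegrable_smul_circ _ (hcf.mul hcont_fV) _ _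
      have hcomm := ((innerSL ℝ).flip u).intervalIntegral_comp_comm hii (a := 0) (b := 2*π)
      calc (∫ s in (0:ℝ)..(2*π), cf s * h s)
          = ∫ s in (0:ℝ)..(2*π), ((innerSL ℝ).flip u) ((cf s * fV V s) • circ s) := by
            apply intervalIntegral.integral_congr
            intro s _
            simp only [ContinuousLinearMap.flip_apply, innerSL_apply_apply]
            rw [real_inner_smul_left, hh]
            simp only
            rw [real_inner_comm]
            ring
        _ = ((innerSL ℝ).flip u) (∫ s in (0:ℝ)..(2*π), (cf s * fV V s) • circ s) := hcomm
        _ = (inner ℝ (∫ s in (0:ℝ)..(2*π), (cf s * fV V s) • circ s) u : ℝ) := rfl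
    have hzc : ∀ n : ℕ, 1 ≤ n → (∫ s in (0:ℝ)..(2*π), Real.cos (n*s) * h s) = 0 := by
      intro n hn
      rw [hswap _ (by fun_prop)]
      exact hIC n hn
    have hzs : ∀ n : ℕ, 1 ≤ n → (∫ s in (0:ℝ)..(2*π), Real.sin (n*s) * h s) = 0 := by
      intro n hn
      rw [hswap _ (by fun_prop)]
      exact hIS n hn
    have hconst := const_of_coeffs hcont hper hzc hzs
    have hf0 : ∀ s : ℝ, fV V s = 0 := by
      apply fV_zero_of_const V hV.continuous u hu0
      intro t t'
      exact hconst t t'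
    refine ⟨fun _ => 0, harm_zero, ?_, ?_⟩
    · intro x _
      rw [gradient_zero_fun]
      simp
    · have e1 : (∫ s in (0:ℝ)..(2 * Real.pi),
          (inner ℝ (gradient (fun _ : E2 => (0:ℝ)) (circ s)) (V (circ s)) : ℝ) • circ s) = 0 := by
        have : ∀ s : ℝ, (inner ℝ (gradient (fun _ : E2 => (0:ℝ)) (circ s)) (V (circ s)) : ℝ) • circ s
            = 0 := by
          intro s
          rw [gradient_zero_fun]
          simp
        rw [intervalIntegral.integral_congr (fun s _ => this s)]
        simp
      have e2 : (inner ℝ (tang s₀) (V (circ s₀)) : ℝ) = 0 := hf0 s₀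
      have e3 : (∫ s in (0:ℝ)..(2 * Real.pi), (inner ℝ (tang s) (V (circ s)) : ℝ) • circ s) = 0 := by
        have : ∀ s : ℝ, (inner ℝ (tang s) (V (circ s)) : ℝ) • circ s = 0 := by
          intro s
          have := hf0 s
          rw [show (inner ℝ (tang s) (V (circ s)) : ℝ) = fV V s from rfl, this, zero_smul]
        rw [intervalIntegral.integral_congr (fun s _ => this s)]
        simp
      rw [e1, e2, e3]
      simp
      exact le_of_lt hε
end
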